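/- Let V be a unital Jordan bimodule over Kan(n) and suppose v ∈ V satisfies v·e_I = v·\bar{e_I} = 0 for all nonempty I ⊆ {1,...,n}. Define v(i) = ((v·\bar{1})·\bar{e_i}). Then for every nonempty subset J ⊆ {1,...,n} with J ⊄ {i}, one has v(i)·e_J = 0. -/
import Mathlib


open Finset in
/-- The Grassmann algebra `G_n` on `n` odd generators, realized as coefficient
functions on subsets of `{1,...,n}` (the basis is `e_I`, `I ⊆ {1,...,n}`). -/
abbrev Gn (n : ℕ) (F : Type) := Finset (Fin n) → F

/-- The sign `(-1)^{#{(i,j) ∈ I×J : j < i}}` arising when multiplying `e_I · e_J`. -/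
def gsign {n : ℕ} (I J : Finset (Fin n)) : ℤ :=
  (-1) ^ (((I ×ˢ J).filter (fun p => p.2 < p.1)).card)

/-- Multiplication in the Grassmann algebra `G_n`. -/
def gmul {F : Type} [Field F] {n : ℕ} (f g : Gn n F) : Gn n F :=
  fun K => ∑ I ∈ K.powerset, (gsign I (K \ I) : F) * f I * g (K \ I)

/-- The odd superderivation `∂/∂e_j` of `G_n`. -/
def pd {F : Type} [Field F] {n : ℕ} (j : Fin n) (f : Gn n F) : Gn n F :=
  fun I => if j ∈ I then 0 else ((-1 : F) ^ ((I.filter (fun i => i < j)).card)) * f (insert j I)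

/-- The grade involution of `G_n`: `e_I ↦ (-1)^{|I|} e_I`. -/
def gInv {F : Type} [Field F] {n : ℕ} (f : Gn n F) : Gn n F :=
  fun I => ((-1 : F) ^ I.card) * f I

/-- The Poisson bracket `{f,g} = (-1)^{|f|} ∑_i (∂f/∂e_i)(∂g/∂e_i)` of `G_n`
(the sign `(-1)^{|f|}` is incorporated bilinearly via the grade involution). -/
def gbr {F : Type} [Field F] {n : ℕ} (f g : Gn n F) : Gn n F :=
  ∑ i : Fin n, gmul (pd i (gInv f)) (pd i g)

/-- `f ∈ G_n` is homogeneous of parity `p`. -/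
def homog {F : Type} [Field F] {n : ℕ} (p : ZMod 2) (f : Gn n F) : Prop :=
  ∀ I : Finset (Fin n), ((I.card : ZMod 2) ≠ p) → f I = 0

/-- `(-1)^p` as an element of the field `F`, for `p : ZMod 2`. -/
def sgn (F : Type) [Field F] (p : ZMod 2) : F := if p = 0 then 1 else -1
/-- The Kantor double `Kan(n) = J(G_n) = G_n ⊕ \bar{G_n}`: an element `(a,b)`
represents `a + \bar{b}`. -/
abbrev Kan (n : ℕ) (F : Type) := Gn n F × Gn n F

/-- Multiplication of the Kantor double `Kan(n)`; the signs `(-1)^{|g|}` of the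
Kantor doubling process are incorporated bilinearly via the grade involution. -/
def kmul {F : Type} [Field F] {n : ℕ} (x y : Kan n F) : Kan n F :=
  (gmul x.1 y.1 + gbr x.2 (gInv y.2), gmul x.1 y.2 + gmul x.2 (gInv y.1))

/-- The basis element `e_I` of `G_n` (coefficient `1` at `I`). -/
def single {F : Type} [Field F] {n : ℕ} (I : Finset (Fin n)) : Gn n F :=
  fun J => if J = I then 1 else 0

/-- The element `e_I ∈ Kan(n)`. -/
def eK {F : Type} [Field F] {n : ℕ} (I : Finset (Fin n)) : Kan n F := (single I, 0)

/-- The element `\bar{e_I} ∈ Kan(n)`. In particular `beK ∅ = \bar{1}`. -/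
def beK {F : Type} [Field F] {n : ℕ} (I : Finset (Fin n)) : Kan n F := (0, single I)

/-- Homogeneity of parity `p` in `Kan(n)` (the bar flips parity). -/
def kHomog {F : Type} [Field F] {n : ℕ} (p : ZMod 2) (x : Kan n F) : Prop :=
  homog p x.1 ∧ homog (p + 1) x.2

/-- Even part of an element of `G_n`. -/
def evenP {F : Type} [Field F] {n : ℕ} (f : Gn n F) : Gn n F :=
  fun I => if (I.card : ZMod 2) = 0 then f I else 0

/-- Odd part of an element of `G_n`. -/
def oddP {F : Type} [Field F] {n : ℕ} (f : Gn n F) : Gn n F :=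
  fun I => if (I.card : ZMod 2) = 1 then f I else 0

/-- Even part of an element of `Kan(n)`. -/
def kEvenPart {F : Type} [Field F] {n : ℕ} (x : Kan n F) : Kan n F := (evenP x.1, oddP x.2)

/-- Odd part of an element of `Kan(n)`. -/
def kOddPart {F : Type} [Field F] {n : ℕ} (x : Kan n F) : Kan n F := (oddP x.1, evenP x.2)

/-- A super vector space is encoded as a product `V0 × V1`; homogeneity of parity `p`. -/
def vHomog {V0 V1 : Type} [Zero V0] [Zero V1] (p : ZMod 2) (v : V0 × V1) : Prop :=
  if p = 0 then v.2 = 0 else v.1 = 0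

/-- The left action of `Kan(n)` on a superbimodule determined from the right action
`act` by supercommutativity: `a·v = (-1)^{|a||v|} v·a` for homogeneous `a, v`. -/
def leftAct {F : Type} [Field F] {n : ℕ} {V0 V1 : Type} [AddCommGroup V0] [Module F V0]
    [AddCommGroup V1] [Module F V1]
    (act : V0 × V1 →ₗ[F] Kan n F →ₗ[F] V0 × V1) (x : Kan n F) (w : V0 × V1) : V0 × V1 :=
  act w (kEvenPart x) + act ((w.1, 0) : V0 × V1) (kOddPart x)
    - act ((0, w.2) : V0 × V1) (kOddPart x)

/-- Multiplication in the split null extension `E = Kan(n) ⊕ V`. -/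
def emul {F : Type} [Field F] {n : ℕ} {V0 V1 : Type} [AddCommGroup V0] [Module F V0]
    [AddCommGroup V1] [Module F V1]
    (act : V0 × V1 →ₗ[F] Kan n F →ₗ[F] V0 × V1)
    (z w : Kan n F × (V0 × V1)) : Kan n F × (V0 × V1) :=
  (kmul z.1 w.1, act z.2 w.1 + leftAct act z.1 w.2)

/-- Homogeneity in the split null extension. -/
def eHomog {F : Type} [Field F] {n : ℕ} {V0 V1 : Type} [AddCommGroup V0] [Module F V0]
    [AddCommGroup V1] [Module F V1] (p : ZMod 2) (z : Kan n F × (V0 × V1)) : Prop :=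
  kHomog p z.1 ∧ vHomog p z.2

/-- A supercommutative superalgebra structure `mul` (with homogeneity predicate `hom`)
is Jordan: supercommutativity and the linearized super Jordan identity hold for
homogeneous elements. -/
def JordanSuper (F : Type) [Field F] {E : Type} [AddCommGroup E] [Module F E]
    (hom : ZMod 2 → E → Prop) (mul : E → E → E) : Prop :=
  (∀ (p q : ZMod 2) (x y : E), hom p x → hom q y → mul x y = sgn F (p * q) • mul y x) ∧
  (∀ (px py pz pt : ZMod 2) (x y z t : E),
      hom px x → hom py y → hom pz z → hom pt t →
      mul (mul (mul x y) z) t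
        + sgn F (py * pz + py * pt + pz * pt) • mul (mul (mul x t) z) y
        + sgn F (px * py + px * pz + px * pt + pz * pt) • mul (mul (mul y t) z) x
      = mul (mul x y) (mul z t) + sgn F (py * pz) • mul (mul x z) (mul y t)
        + sgn F (pt * (py + pz)) • mul (mul x t) (mul y z))

/-- `V = V0 ⊕ V1` with right action `act` is a Jordan superbimodule over `Kan(n)`:
the split null extension `Kan(n) ⊕ V` is a (graded) Jordan superalgebra. -/
def IsJordanBimod {F : Type} [Field F] {n : ℕ} {V0 V1 : Type} [AddCommGroup V0] [Module F V0]
    [AddCommGroup V1] [Module F V1]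
    (act : V0 × V1 →ₗ[F] Kan n F →ₗ[F] V0 × V1) : Prop :=
  JordanSuper F (E := Kan n F × (V0 × V1)) eHomog (emul act) ∧
  (∀ (p q : ZMod 2) (z w : Kan n F × (V0 × V1)),
      eHomog p z → eHomog q w → eHomog (p + q) (emul act z w))

section GnLemmas
open Finset
variable {F : Type} [Field F] {n : ℕ}

lemma gmul_zero_left (g : Gn n F) : gmul (0 : Gn n F) g = 0 := by
  funext K; simp [gmul]

lemma gmul_zero_right (f : Gn n F) : gmul f (0 : Gn n F) = 0 := by
  funext K; simp [gmul]

lemma gInv_zero : gInv (0 : Gn n F) = 0 := by funext I; simp [gInv]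

lemma pd_zero (j : Fin n) : pd j (0 : Gn n F) = 0 := by
  funext I; simp [pd]

lemma gbr_zero_left (g : Gn n F) : gbr (0 : Gn n F) g = 0 := by
  simp [gbr, gInv_zero, pd_zero, gmul_zero_left]

lemma gbr_zero_right (f : Gn n F) : gbr f (0 : Gn n F) = 0 := by
  simp [gbr, pd_zero, gmul_zero_right]

lemma kmul_zero_left (x : Kan n F) : kmul (0 : Kan n F) x = 0 := by
  simp [kmul, gmul_zero_left, gbr_zero_left, Prod.ext_iff]

lemma kmul_zero_right (x : Kan n F) : kmul x (0 : Kan n F) = 0 := by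
  simp [kmul, gmul_zero_right, gbr_zero_right, gInv_zero, Prod.ext_iff]

lemma pd_single_empty (k : Fin n) : pd k (single (∅ : Finset (Fin n)) : Gn n F) = 0 := by
  funext I
  simp [pd, single, Finset.insert_ne_empty]

lemma gInv_single_empty : gInv (single (∅ : Finset (Fin n)) : Gn n F) = single ∅ := by
  funext I
  by_cases h : I = ∅ <;> simp [gInv, single, h]

lemma gmul_single_empty_left (g : Gn n F) : gmul (single ∅) g = g := by
  funext K
  rw [gmul, Finset.sum_eq_single_of_mem ∅ (Finset.empty_mem_powerset K)]
  · simp [single, gsign]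
  · intro I _ hI
    simp [single, hI]

lemma gmul_single_empty_right (f : Gn n F) : gmul f (single ∅) = f := by
  funext K
  rw [gmul, Finset.sum_eq_single_of_mem K (Finset.mem_powerset_self K)]
  · simp [single, gsign]
  · intro I hI hne
    have : K \ I ≠ ∅ := by
      rw [Finset.mem_powerset] at hI
      intro h
      exact hne (Finset.Subset.antisymm hI (by
        intro a ha
        by_contra hna
        exact (Finset.eq_empty_iff_forall_notMem.mp h a) (Finset.mem_sdiff.mpr ⟨ha, hna⟩)))
    simp [single, this]

lemma gbr_single_empty_right (f : Gn n F) : gbr f (single ∅) = 0 := by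
  simp [gbr, pd_single_empty, gmul_zero_right]

lemma gmul_apply_empty (f g : Gn n F) : gmul f g ∅ = f ∅ * g ∅ := by
  simp [gmul, gsign]

lemma pd_apply_empty (k : Fin n) (f : Gn n F) : pd k f ∅ = f {k} := by
  simp [pd]

lemma gInv_apply_singleton (f : Gn n F) (k : Fin n) : gInv f {k} = - f {k} := by
  simp [gInv]

lemma gbr_apply_empty (f g : Gn n F) :
    gbr f g ∅ = ∑ k : Fin n, (gInv f) {k} * g {k} := by
  rw [gbr]
  rw [Finset.sum_apply]
  congr 1
  funext k
  rw [gmul_apply_empty, pd_apply_empty, pd_apply_empty]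

lemma q_empty {J : Finset (Fin n)} {i : Fin n} (h : J ≠ {i}) :
    gbr (gInv (single J) : Gn n F) (gInv (single {i})) ∅ = 0 := by
  rw [gbr_apply_empty]
  apply Finset.sum_eq_zero
  intro k _
  rw [gInv_apply_singleton, gInv_apply_singleton, gInv_apply_singleton]
  by_cases hk : ({k} : Finset (Fin n)) = J
  · by_cases hk' : ({k} : Finset (Fin n)) = {i}
    · exact absurd (hk ▸ hk') h
    · simp only [single, hk, hk']
      simp [hk']
      intro hJi; exact absurd (hk.trans hJi) hk'
  · simp [single, hk]

lemma gn_decomp (f : Gn n F) : ∑ K : Finset (Fin n), f K • (single K : Gn n F) = f := by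
  funext J
  rw [Finset.sum_apply]
  simp only [Pi.smul_apply, single, smul_eq_mul, mul_ite, mul_one, mul_zero]
  simp

lemma homog_zero (p : ZMod 2) : homog p (0 : Gn n F) := fun _ _ => rfl

lemma homog_single (I0 : Finset (Fin n)) :
    homog ((I0.card : ZMod 2)) (single I0 : Gn n F) := by
  intro I hI
  rw [single]
  split
  · next h => exact absurd (h ▸ rfl) hI
  · rfl

end GnLemmas
section ELemmas
open Finset
variable {F : Type} [Field F] {n : ℕ}
variable {V0 V1 : Type} [AddCommGroup V0] [Module F V0] [AddCommGroup V1] [Module F V1]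
variable (act : V0 × V1 →ₗ[F] Kan n F →ₗ[F] V0 × V1)

lemma evenP_zero : evenP (0 : Gn n F) = 0 := by funext I; simp [evenP]
lemma oddP_zero : oddP (0 : Gn n F) = 0 := by funext I; simp [oddP]

lemma kEvenPart_zero : kEvenPart (0 : Kan n F) = 0 := by
  simp [kEvenPart, evenP_zero, oddP_zero, Prod.ext_iff]

lemma kOddPart_zero : kOddPart (0 : Kan n F) = 0 := by
  simp [kOddPart, evenP_zero, oddP_zero, Prod.ext_iff]

lemma leftAct_zero_right (x : Kan n F) : leftAct act x (0 : V0 × V1) = 0 := by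
  simp [leftAct, Prod.mk_zero_zero]

lemma leftAct_zero_left (w : V0 × V1) : leftAct act (0 : Kan n F) w = 0 := by
  simp [leftAct, kEvenPart_zero, kOddPart_zero]

lemma emul_zero_left (z : Kan n F × (V0 × V1)) : emul act 0 z = 0 := by
  simp [emul, kmul_zero_left, leftAct_zero_left, Prod.ext_iff]

lemma emul_zero_right (z : Kan n F × (V0 × V1)) : emul act z 0 = 0 := by
  simp [emul, kmul_zero_right, leftAct_zero_right, Prod.ext_iff]

lemma kan_decomp_fst (f : Gn n F) :
    ((f, 0) : Kan n F) = ∑ K : Finset (Fin n), f K • eK K := by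
  rw [Prod.ext_iff]
  constructor
  · rw [Prod.fst_sum]
    simp only [Prod.smul_fst, eK]
    exact (gn_decomp f).symm
  · rw [Prod.snd_sum]
    simp [eK]

lemma kan_decomp_snd (f : Gn n F) :
    ((0, f) : Kan n F) = ∑ K : Finset (Fin n), f K • beK K := by
  rw [Prod.ext_iff]
  constructor
  · rw [Prod.fst_sum]
    simp [beK]
  · rw [Prod.snd_sum]
    simp only [Prod.smul_snd, beK]
    exact (gn_decomp f).symm

/-- If `u` is killed by all `e_K, ē_K` with `K ≠ ∅`, then `u` is killed by any
element of `Kan(n)` whose coefficients at `∅` vanish. -/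
lemma act_eq_zero_of_kills (u : V0 × V1)
    (hk : ∀ K : Finset (Fin n), K ≠ ∅ → act u (eK K) = 0 ∧ act u (beK K) = 0)
    (x : Kan n F) (h1 : x.1 ∅ = 0) (h2 : x.2 ∅ = 0) : act u x = 0 := by
  have hx : x = ((x.1, 0) : Kan n F) + ((0, x.2) : Kan n F) := by
    rw [Prod.ext_iff]; simp
  rw [hx, map_add, kan_decomp_fst, kan_decomp_snd, map_sum, map_sum]
  rw [show (0 : V0 × V1) = 0 + 0 by simp]
  congr 1 <;> (apply Finset.sum_eq_zero; intro K _)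
  · by_cases hK : K = ∅
    · subst hK; rw [h1]; simp
    · rw [map_smul, (hk K hK).1, smul_zero]
  · by_cases hK : K = ∅
    · subst hK; rw [h2]; simp
    · rw [map_smul, (hk K hK).2, smul_zero]

lemma vHomog_zero (p : ZMod 2) : vHomog p (0 : V0 × V1) := by
  unfold vHomog; split <;> simp

lemma vhomog_add_cancel {p : ZMod 2} {a b : V0 × V1} (ha : vHomog p a)
    (hb : vHomog (p + 1) b) (hab : a + b = 0) : a = 0 ∧ b = 0 := by
  have hp : ∀ q : ZMod 2, q = 0 ∨ q = 1 := by decide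
  have h1 : a.1 + b.1 = 0 := congrArg Prod.fst hab
  have h2 : a.2 + b.2 = 0 := congrArg Prod.snd hab
  rcases hp p with h | h <;> subst h
  · have ha2 : a.2 = 0 := by simpa [vHomog] using ha
    have hb1 : b.1 = 0 := by simpa [vHomog] using hb
    have : a.1 = 0 := by rw [hb1, add_zero] at h1; exact h1
    have hb2 : b.2 = 0 := by rw [ha2, zero_add] at h2; exact h2
    exact ⟨Prod.ext this ha2, Prod.ext hb1 hb2⟩
  · have ha1 : a.1 = 0 := by simpa [vHomog] using ha
    have hb2 : b.2 = 0 := by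
      have : (1 + 1 : ZMod 2) = 0 := by decide
      rw [this] at hb
      simpa [vHomog] using hb
    have hb1 : b.1 = 0 := by rw [ha1, zero_add] at h1; exact h1
    have ha2 : a.2 = 0 := by rw [hb2, add_zero] at h2; exact h2
    exact ⟨Prod.ext ha1 ha2, Prod.ext hb1 hb2⟩

end ELemmas
section CompLemmas
open Finset
variable {F : Type} [Field F] {n : ℕ}
variable {V0 V1 : Type} [AddCommGroup V0] [Module F V0] [AddCommGroup V1] [Module F V1]
variable (act : V0 × V1 →ₗ[F] Kan n F →ₗ[F] V0 × V1)

lemma eHomog_vpart (p : ZMod 2) (u : V0 × V1) (h : vHomog p u) :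
    eHomog p (((0 : Kan n F), u) : Kan n F × (V0 × V1)) :=
  ⟨⟨homog_zero _, homog_zero _⟩, h⟩

lemma eHomog_eK (K : Finset (Fin n)) :
    eHomog ((K.card : ZMod 2)) (((eK K : Kan n F), (0 : V0 × V1)) : Kan n F × (V0 × V1)) :=
  ⟨⟨homog_single K, homog_zero _⟩, vHomog_zero _⟩

lemma eHomog_beK (K : Finset (Fin n)) :
    eHomog ((K.card : ZMod 2) + 1)
      (((beK K : Kan n F), (0 : V0 × V1)) : Kan n F × (V0 × V1)) := by
  refine ⟨⟨homog_zero _, ?_⟩, vHomog_zero _⟩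
  have h : ((K.card : ZMod 2) + 1 + 1) = (K.card : ZMod 2) := by
    have : (1 + 1 : ZMod 2) = 0 := by decide
    rw [add_assoc, this, add_zero]
  rw [h]
  exact homog_single K

/-- The parity of `act u x` for homogeneous `u` (in V) and `x` a pure-Kan
homogeneous element. -/
lemma act_vhomog (hJb : IsJordanBimod act) (p q : ZMod 2) (u : V0 × V1) (x : Kan n F)
    (hu : vHomog p u)
    (hx : eHomog q ((x, (0 : V0 × V1)) : Kan n F × (V0 × V1))) :
    vHomog (p + q) (act u x) := by
  have := hJb.2 p q ((0 : Kan n F), u) (x, (0 : V0 × V1)) (eHomog_vpart p u hu) hx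
  have he : emul act ((0 : Kan n F), u) (x, (0 : V0 × V1))
      = ((0 : Kan n F), act u x) := by
    rw [emul]
    simp [kmul_zero_left, leftAct_zero_left, leftAct_zero_right]
  rw [he] at this
  exact this.2

/-- The homogeneous components of a special element are special. -/
lemma kills_components (hJb : IsJordanBimod act) (v : V0 × V1)
    (hv : ∀ I : Finset (Fin n), I ≠ ∅ → act v (eK I) = 0 ∧ act v (beK I) = 0) :
    (∀ I : Finset (Fin n), I ≠ ∅ →
        act ((v.1, 0) : V0 × V1) (eK I) = 0 ∧ act ((v.1, 0) : V0 × V1) (beK I) = 0) ∧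
    (∀ I : Finset (Fin n), I ≠ ∅ →
        act ((0, v.2) : V0 × V1) (eK I) = 0 ∧ act ((0, v.2) : V0 × V1) (beK I) = 0) := by
  have hsum : ∀ x : Kan n F,
      act ((v.1, 0) : V0 × V1) x + act ((0, v.2) : V0 × V1) x = act v x := by
    intro x
    rw [← LinearMap.add_apply, ← map_add,
      show ((v.1, 0) : V0 × V1) + ((0, v.2) : V0 × V1) = v from by rw [Prod.ext_iff]; simp]
  have h0 : vHomog 0 ((v.1, 0) : V0 × V1) := by simp [vHomog]
  have h1 : vHomog 1 ((0, v.2) : V0 × V1) := by simp [vHomog]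
  have key : ∀ I : Finset (Fin n), I ≠ ∅ →
      (act ((v.1, 0) : V0 × V1) (eK I) = 0 ∧ act ((0, v.2) : V0 × V1) (eK I) = 0) ∧
      (act ((v.1, 0) : V0 × V1) (beK I) = 0 ∧ act ((0, v.2) : V0 × V1) (beK I) = 0) := by
    intro I hI
    constructor
    · have ha := act_vhomog act hJb 0 (I.card : ZMod 2) _ (eK I) h0 (eHomog_eK I)
      have hb := act_vhomog act hJb 1 (I.card : ZMod 2) _ (eK I) h1 (eHomog_eK I)
      rw [zero_add] at ha
      rw [show (1 + (I.card : ZMod 2)) = (I.card : ZMod 2) + 1 from add_comm _ _] at hb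
      exact vhomog_add_cancel ha hb (by rw [hsum]; exact (hv I hI).1)
    · have ha := act_vhomog act hJb 0 ((I.card : ZMod 2) + 1) _ (beK I) h0 (eHomog_beK I)
      have hb := act_vhomog act hJb 1 ((I.card : ZMod 2) + 1) _ (beK I) h1 (eHomog_beK I)
      rw [zero_add] at ha
      rw [show (1 + ((I.card : ZMod 2) + 1)) = ((I.card : ZMod 2) + 1) + 1
        from add_comm _ _] at hb
      exact vhomog_add_cancel ha hb (by rw [hsum]; exact (hv I hI).2)
  exact ⟨fun I hI => ⟨((key I hI).1).1, ((key I hI).2).1⟩,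
         fun I hI => ⟨((key I hI).1).2, ((key I hI).2).2⟩⟩

lemma evenP_apply_empty (f : Gn n F) : evenP f ∅ = f ∅ := by simp [evenP]
lemma oddP_apply_empty (f : Gn n F) : oddP f ∅ = 0 := by
  rw [oddP]; simp

/-- `leftAct` of an empty-coefficient-free Kan element on a special element vanishes. -/
lemma leftAct_eq_zero (u : V0 × V1)
    (h0 : ∀ x : Kan n F, x.1 ∅ = 0 → x.2 ∅ = 0 → act u x = 0)
    (h1 : ∀ x : Kan n F, x.1 ∅ = 0 → x.2 ∅ = 0 → act ((u.1, 0) : V0 × V1) x = 0)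
    (h2 : ∀ x : Kan n F, x.1 ∅ = 0 → x.2 ∅ = 0 → act ((0, u.2) : V0 × V1) x = 0)
    (x : Kan n F) (hx1 : x.1 ∅ = 0) (hx2 : x.2 ∅ = 0) :
    leftAct act x u = 0 := by
  rw [leftAct]
  rw [h0 (kEvenPart x) (by simpa [kEvenPart, evenP_apply_empty] using hx1)
        (by simp [kEvenPart, oddP_apply_empty]),
      h1 (kOddPart x) (by simp [kOddPart, oddP_apply_empty])
        (by simpa [kOddPart, evenP_apply_empty] using hx2),
      h2 (kOddPart x) (by simp [kOddPart, oddP_apply_empty])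
        (by simpa [kOddPart, evenP_apply_empty] using hx2)]
  simp

end CompLemmas
section Main
open Finset
variable {F : Type} [Field F] {n : ℕ}
variable {V0 V1 : Type} [AddCommGroup V0] [Module F V0] [AddCommGroup V1] [Module F V1]

lemma sgn_zero : sgn F 0 = 1 := by simp [sgn]

/-- The key computation, for a homogeneous special element `u`. -/
lemma key_homog (act : V0 × V1 →ₗ[F] Kan n F →ₗ[F] V0 × V1)
    (hJb : IsJordanBimod act) (i : Fin n) (J : Finset (Fin n))
    (hJne : J ≠ ∅) (hJi : J ≠ {i})
    (u : V0 × V1) (pu : ZMod 2) (hpu : vHomog pu u)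
    (hku : ∀ I : Finset (Fin n), I ≠ ∅ → act u (eK I) = 0 ∧ act u (beK I) = 0)
    (hku0 : ∀ I : Finset (Fin n), I ≠ ∅ →
      act ((u.1, 0) : V0 × V1) (eK I) = 0 ∧ act ((u.1, 0) : V0 × V1) (beK I) = 0)
    (hku1 : ∀ I : Finset (Fin n), I ≠ ∅ →
      act ((0, u.2) : V0 × V1) (eK I) = 0 ∧ act ((0, u.2) : V0 × V1) (beK I) = 0) :
    act (act (act u (beK ∅)) (beK {i})) (eK J) = 0 := by
  have hA := act_eq_zero_of_kills act u hku
  have hA0 := act_eq_zero_of_kills act _ hku0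
  have hA1 := act_eq_zero_of_kills act _ hku1
  have hL := leftAct_eq_zero act u hA hA0 hA1
  set X : Kan n F × (V0 × V1) := ((0 : Kan n F), u) with hXdef
  set B1 : Kan n F × (V0 × V1) := ((beK ∅ : Kan n F), (0 : V0 × V1)) with hB1def
  set Bi : Kan n F × (V0 × V1) := ((beK ({i} : Finset (Fin n)) : Kan n F), (0 : V0 × V1))
    with hBidef
  set EJ : Kan n F × (V0 × V1) := ((eK J : Kan n F), (0 : V0 × V1)) with hEJdef
  -- homogeneity
  have hXh : eHomog pu X := eHomog_vpart pu u hpu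
  have hB1h : eHomog 1 B1 := by
    have h := eHomog_beK (F := F) (V0 := V0) (V1 := V1) (∅ : Finset (Fin n))
    simpa using h
  have hBih : eHomog 0 Bi := by
    have h := eHomog_beK (F := F) (V0 := V0) (V1 := V1) ({i} : Finset (Fin n))
    rw [show ((({i} : Finset (Fin n)).card : ZMod 2) + 1) = 0 by
      simp only [Finset.card_singleton, Nat.cast_one]; decide] at h
    exact h
  have hEJh : eHomog ((J.card : ZMod 2)) EJ := eHomog_eK J
  -- basic products
  have hXB1 : emul act X B1 = ((0 : Kan n F), act u (beK ∅)) := by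
    rw [hXdef, hB1def, emul]
    simp [kmul_zero_left, leftAct_zero_right]
  have hXBi : emul act X Bi = 0 := by
    rw [hXdef, hBidef, emul]
    simp [kmul_zero_left, leftAct_zero_right,
      (hku {i} (Finset.singleton_ne_empty i)).2, Prod.ext_iff]
  have hXEJ : emul act X EJ = 0 := by
    rw [hXdef, hEJdef, emul]
    simp [kmul_zero_left, leftAct_zero_right, (hku J hJne).1, Prod.ext_iff]
  have hQ : emul act (emul act X B1) Bi
      = ((0 : Kan n F), act (act u (beK ∅)) (beK {i})) := by
    rw [hXB1, hBidef, emul]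
    simp [kmul_zero_left, leftAct_zero_right]
  -- ((ē_i e_J) \bar1) = 0
  have hBiEJ : emul act Bi EJ
      = ((((0 : Gn n F), gmul (single {i}) (gInv (single J))) : Kan n F),
         (0 : V0 × V1)) := by
    rw [hBidef, hEJdef, emul]
    simp [kmul, beK, eK, gmul_zero_left, gInv_zero, gbr_zero_right, leftAct_zero_right,
      Prod.ext_iff]
  have hBiEJB1 : emul act (emul act Bi EJ) B1 = 0 := by
    rw [hBiEJ, hB1def, emul]
    simp [kmul, beK, gmul_zero_left, gmul_zero_right, gInv_zero, gInv_single_empty,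
      gbr_single_empty_right, leftAct_zero_right, Prod.ext_iff]
  -- ((\bar1 e_J) ē_i) x = 0
  have hB1EJ : emul act B1 EJ
      = ((((0 : Gn n F), gInv (single J)) : Kan n F), (0 : V0 × V1)) := by
    rw [hB1def, hEJdef, emul]
    simp [kmul, beK, eK, gmul_zero_left, gInv_zero, gbr_zero_right,
      gmul_single_empty_left, leftAct_zero_right, Prod.ext_iff]
  have hB1EJBi : emul act (emul act B1 EJ) Bi
      = (((gbr (gInv (single J)) (gInv (single {i})), (0 : Gn n F)) : Kan n F),
         (0 : V0 × V1)) := by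
    rw [hB1EJ, hBidef, emul]
    simp [kmul, beK, gmul_zero_left, gmul_zero_right, gInv_zero, leftAct_zero_right,
      Prod.ext_iff]
  have hB1EJBiX : emul act (emul act (emul act B1 EJ) Bi) X = 0 := by
    rw [hB1EJBi, hXdef, emul]
    have hq : (gbr (gInv (single J)) (gInv (single {i})) : Gn n F) ∅ = 0 := q_empty hJi
    rw [Prod.ext_iff]
    constructor
    · exact kmul_zero_right _
    · simp only [Prod.snd]
      rw [hL ((gbr (gInv (single J)) (gInv (single {i})), (0 : Gn n F)) : Kan n F) hq rfl]
      simp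
  -- Step (i): (v \bar1)(ē_i e_J) = 0
  obtain ⟨hJsuper, hJgrade⟩ := hJb
  obtain ⟨_, hlin⟩ := hJsuper
  have step1 := hlin pu 0 1 (J.card : ZMod 2) X Bi B1 EJ hXh hBih hB1h hEJh
  rw [hXBi, hXEJ] at step1
  simp only [emul_zero_left, smul_zero, zero_add, add_zero, hBiEJB1] at step1
  rw [zero_mul, sgn_zero, one_smul] at step1
  have hR1 : emul act (emul act X B1) (emul act Bi EJ) = 0 := step1.symm
  -- Step (ii): main identity
  have step2 := hlin pu 1 0 (J.card : ZMod 2) X B1 Bi EJ hXh hB1h hBih hEJh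
  rw [hXEJ, hXBi, hR1, hB1EJBiX] at step2
  simp only [emul_zero_left, smul_zero, zero_add, add_zero] at step2
  -- conclude
  rw [hQ] at step2
  have hfin : emul act (((0 : Kan n F), act (act u (beK ∅)) (beK {i}))
      : Kan n F × (V0 × V1)) EJ = 0 := step2
  rw [hEJdef, emul] at hfin
  have := congrArg Prod.snd hfin
  simpa [leftAct_zero_right] using this

end Main
/-- if `v` is a special element of a unital Jordan bimodule `V` over
`Kan(n)` (annihilated by all `e_I, \bar{e_I}`, `I ≠ ∅`), then `v(i) = (v·\bar{1})·\bar{e_i}`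
satisfies `v(i)·e_J = 0` for every nonempty `J ⊄ {i}`. -/
theorem special_element_step {F : Type} [Field F] (hchar : (2 : F) ≠ 0)
    {n : ℕ} (hn : 2 ≤ n)
    {V0 V1 : Type} [AddCommGroup V0] [Module F V0] [AddCommGroup V1] [Module F V1]
    (act : V0 × V1 →ₗ[F] Kan n F →ₗ[F] V0 × V1) (hJ : IsJordanBimod act)
    (hu : ∀ v : V0 × V1, act v (eK ∅) = v)
    (v : V0 × V1)
    (hv : ∀ I : Finset (Fin n), I ≠ ∅ → act v (eK I) = 0 ∧ act v (beK I) = 0) :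
    ∀ i : Fin n, ∀ J : Finset (Fin n), J ≠ ∅ → ¬ J ⊆ {i} →
      act (act (act v (beK ∅)) (beK {i})) (eK J) = 0 := by
  intro i J hJne hJsub
  have hJi : J ≠ {i} := fun h => hJsub (by rw [h])
  obtain ⟨hk0, hk1⟩ := kills_components act hJ v hv
  -- components of the components
  have hk00 : ∀ I : Finset (Fin n), I ≠ ∅ →
      act ((((v.1, 0) : V0 × V1).1, 0) : V0 × V1) (eK I) = 0 ∧
      act ((((v.1, 0) : V0 × V1).1, 0) : V0 × V1) (beK I) = 0 := hk0
  have hk01 : ∀ I : Finset (Fin n), I ≠ ∅ →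
      act ((0, ((v.1, 0) : V0 × V1).2) : V0 × V1) (eK I) = 0 ∧
      act ((0, ((v.1, 0) : V0 × V1).2) : V0 × V1) (beK I) = 0 := by
    intro I hI
    constructor <;> · show act (0 : V0 × V1) _ = 0; simp
  have hk10 : ∀ I : Finset (Fin n), I ≠ ∅ →
      act ((((0, v.2) : V0 × V1).1, 0) : V0 × V1) (eK I) = 0 ∧
      act ((((0, v.2) : V0 × V1).1, 0) : V0 × V1) (beK I) = 0 := by
    intro I hI
    constructor <;> · show act (0 : V0 × V1) _ = 0; simp
  have hk11 : ∀ I : Finset (Fin n), I ≠ ∅ →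
      act ((0, ((0, v.2) : V0 × V1).2) : V0 × V1) (eK I) = 0 ∧
      act ((0, ((0, v.2) : V0 × V1).2) : V0 × V1) (beK I) = 0 := hk1
  have key0 := key_homog act hJ i J hJne hJi ((v.1, 0) : V0 × V1) 0
    (by simp [vHomog]) hk0 hk00 hk01
  have key1 := key_homog act hJ i J hJne hJi ((0, v.2) : V0 × V1) 1
    (by simp [vHomog]) hk1 hk10 hk11
  have base : act v (beK ∅)
      = act ((v.1, 0) : V0 × V1) (beK ∅) + act ((0, v.2) : V0 × V1) (beK ∅) := by
    rw [← LinearMap.add_apply, ← map_add,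
      show ((v.1, 0) : V0 × V1) + ((0, v.2) : V0 × V1) = v from by rw [Prod.ext_iff]; simp]
  rw [base, map_add, LinearMap.add_apply, map_add, LinearMap.add_apply, key0, key1, add_zero]
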